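/- Let K be a field and let (U, R_U), (V, R_V), (W, R_W) be quadratic data over K. Let T₁ = S₍₂₃₎(R_U^⊥ ⊗ (V ⊗ V) + (U* ⊗ U*) ⊗ R_V) be the relation space of (U*, R_U^⊥) ∘ (V, R_V), let T₂ = S₍₂₃₎(R_V^⊥ ⊗ (W ⊗ W) + (V* ⊗ V*) ⊗ R_W) be the relation space of (V*, R_V^⊥) ∘ (W, R_W), and let T₃ = S₍₂₃₎(R_U^⊥ ⊗ (W ⊗ W) + (U* ⊗ U*) ⊗ R_W) be the relation space of (U*, R_U^⊥) ∘ (W, R_W). Let μ : (U* ⊗ V) ⊗ (V* ⊗ W) → U* ⊗ W be the linear map (ξ ⊗ v) ⊗ (η ⊗ w) ↦ η(v)·(ξ ⊗ w). Then μ is a morphism of quadratic data from the black product ((U* ⊗ V) ⊗ (V* ⊗ W), S₍₂₃₎(T₁ ⊗ T₂)) to (U* ⊗ W, T₃); that is, (μ ⊗ μ)(S₍₂₃₎(T₁ ⊗ T₂)) ⊆ T₃. (This is the composition law M of the QA-enrichment of the category of quadratic algebras.) -/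

import Mathlib

open TensorProduct Module

noncomputable section

/-- The image of `R ⊗ S` inside `A ⊗[K] B`, for subspaces `R ⊆ A`, `S ⊆ B`. -/
def subTensor (K : Type) [Field K] {A B : Type} [AddCommMonoid A] [AddCommMonoid B]
    [Module K A] [Module K B] (R : Submodule K A) (S : Submodule K B) :
    Submodule K (A ⊗[K] B) :=
  LinearMap.range (TensorProduct.map R.subtype S.subtype)

/-- The relation space `S₍₂₃₎(R ⊗ S)` of the black product of the quadratic data
`(V, R)` and `(W, S)`. -/
def blackRel (K : Type) [Field K] {V W : Type} [AddCommMonoid V] [AddCommMonoid W]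
    [Module K V] [Module K W] (R : Submodule K (V ⊗[K] V)) (S : Submodule K (W ⊗[K] W)) :
    Submodule K ((V ⊗[K] W) ⊗[K] (V ⊗[K] W)) :=
  Submodule.map (TensorProduct.tensorTensorTensorComm K V V W W).toLinearMap
    (subTensor K R S)

/-- The relation space `S₍₂₃₎(R ⊗ (W ⊗ W) + (V ⊗ V) ⊗ S)` of the white product of the
quadratic data `(V, R)` and `(W, S)`. -/
def whiteRel (K : Type) [Field K] {V W : Type} [AddCommMonoid V] [AddCommMonoid W]
    [Module K V] [Module K W] (R : Submodule K (V ⊗[K] V)) (S : Submodule K (W ⊗[K] W)) :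
    Submodule K ((V ⊗[K] W) ⊗[K] (V ⊗[K] W)) :=
  Submodule.map (TensorProduct.tensorTensorTensorComm K V V W W).toLinearMap
    (subTensor K R (⊤ : Submodule K (W ⊗[K] W)) ⊔ subTensor K (⊤ : Submodule K (V ⊗[K] V)) S)

/-- The annihilator `R^⊥ ⊆ V* ⊗ V*` of a subspace `R ⊆ V ⊗ V`, under the canonical
pairing of `V* ⊗ V*` with `V ⊗ V`. -/
def annRel (K : Type) [Field K] {V : Type} [AddCommMonoid V] [Module K V]
    (R : Submodule K (V ⊗[K] V)) :
    Submodule K (Module.Dual K V ⊗[K] Module.Dual K V) :=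
  Submodule.comap (TensorProduct.dualDistrib K V V) R.dualAnnihilator

/-- `f` is a morphism of quadratic data `(V, R) → (W, S)`:  `(f ⊗ f)(R) ⊆ S`. -/
def IsQuadMor (K : Type) [Field K] {V W : Type} [AddCommMonoid V] [AddCommMonoid W]
    [Module K V] [Module K W] (R : Submodule K (V ⊗[K] V)) (S : Submodule K (W ⊗[K] W))
    (f : V →ₗ[K] W) : Prop :=
  Submodule.map (TensorProduct.map f f) R ≤ S


/-!
After the middle-factor swaps, `μ ⊗ μ` becomes the contraction of
`((U* ⊗ U*) ⊗ (V ⊗ V)) ⊗ ((V* ⊗ V*) ⊗ (W ⊗ W))` along the pairing of `V ⊗ V` with `V* ⊗ V*`.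
Expanding `T₁ ⊗ T₂` into four summands, the contraction sends the summands containing
`R_U^⊥` into `R_U^⊥ ⊗ (W ⊗ W)`, those containing `R_W` into `(U* ⊗ U*) ⊗ R_W`, and kills
`R_V ⊗ R_V^⊥`.
-/

lemma subTensor_eq_map₂ {K : Type} [Field K] {A B : Type} [AddCommMonoid A] [AddCommMonoid B]
    [Module K A] [Module K B] (P : Submodule K A) (Q : Submodule K B) :
    subTensor K P Q = Submodule.map₂ (TensorProduct.mk K A B) P Q :=
  TensorProduct.range_mapIncl P Q

lemma dualDistrib_apply_eq_zero_of_mem_annRel {K : Type} [Field K] {V : Type} [AddCommMonoid V]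
    [Module K V] {R : Submodule K (V ⊗[K] V)} {s : Dual K V ⊗[K] Dual K V}
    (hs : s ∈ annRel K R) {x : V ⊗[K] V} (hx : x ∈ R) : dualDistrib K V V s x = 0 :=
  (Submodule.mem_dualAnnihilator _).mp hs x hx

section Contraction

variable {K : Type} [Field K] {A X Y B : Type}
  [AddCommMonoid A] [AddCommMonoid X] [AddCommMonoid Y] [AddCommMonoid B]
  [Module K A] [Module K X] [Module K Y] [Module K B]

open Submodule

def midContract (e : X →ₗ[K] Y →ₗ[K] K) : (A ⊗[K] X) →ₗ[K] (Y ⊗[K] B) →ₗ[K] A ⊗[K] B :=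
  TensorProduct.curry <|
    (TensorProduct.lid K (A ⊗[K] B)).toLinearMap
      ∘ₗ TensorProduct.map (TensorProduct.lift e) LinearMap.id
      ∘ₗ (TensorProduct.tensorTensorTensorComm K X A Y B).toLinearMap
      ∘ₗ TensorProduct.map (TensorProduct.comm K A X).toLinearMap LinearMap.id

@[simp]
lemma midContract_tmul_tmul (e : X →ₗ[K] Y →ₗ[K] K) (a : A) (x : X) (y : Y) (b : B) :
    midContract e (a ⊗ₜ[K] x) (y ⊗ₜ[K] b) = e x y • (a ⊗ₜ[K] b) := by
  simp [midContract]

lemma map₂_midContract_map₂_mk_le (e : X →ₗ[K] Y →ₗ[K] K) (P : Submodule K A) (RX : Submodule K X)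
    (RY : Submodule K Y) (Q : Submodule K B) :
    map₂ (midContract e) (map₂ (mk K A X) P RX) (map₂ (mk K Y B) RY Q) ≤ map₂ (mk K A B) P Q := by
  rw [map₂_eq_span_image2 (mk K A X), map₂_eq_span_image2 (mk K Y B), map₂_span_span, span_le]
  rintro _ ⟨_, ⟨a, ha, x, -, rfl⟩, _, ⟨y, -, b, hb, rfl⟩, rfl⟩
  simp only [SetLike.mem_coe, mk_apply, midContract_tmul_tmul]
  exact smul_mem _ _ (apply_mem_map₂ _ ha hb)

lemma map₂_midContract_map₂_mk_eq_bot (e : X →ₗ[K] Y →ₗ[K] K) (P : Submodule K A)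
    {RX : Submodule K X} {RY : Submodule K Y} (Q : Submodule K B)
    (he : ∀ x ∈ RX, ∀ y ∈ RY, e x y = 0) :
    map₂ (midContract e) (map₂ (mk K A X) P RX) (map₂ (mk K Y B) RY Q) = ⊥ := by
  rw [eq_bot_iff, map₂_eq_span_image2 (mk K A X), map₂_eq_span_image2 (mk K Y B),
    map₂_span_span, span_le]
  rintro _ ⟨_, ⟨a, -, x, hx, rfl⟩, _, ⟨y, hy, b, -, rfl⟩, rfl⟩
  simp [he x hx y hy]

lemma map₂_midContract_white_le (e : X →ₗ[K] Y →ₗ[K] K) (P : Submodule K A)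
    {RX : Submodule K X} {RY : Submodule K Y} (Q : Submodule K B)
    (he : ∀ x ∈ RX, ∀ y ∈ RY, e x y = 0) :
    map₂ (midContract e) (map₂ (mk K A X) P ⊤ ⊔ map₂ (mk K A X) ⊤ RX)
        (map₂ (mk K Y B) RY ⊤ ⊔ map₂ (mk K Y B) ⊤ Q) ≤
      map₂ (mk K A B) P ⊤ ⊔ map₂ (mk K A B) ⊤ Q := by
  rw [map₂_sup_left, map₂_sup_right, map₂_sup_right, map₂_midContract_map₂_mk_eq_bot e ⊤ ⊤ he]
  refine sup_le (sup_le ?_ ?_) (sup_le bot_le ?_)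
  · exact (map₂_midContract_map₂_mk_le e P ⊤ RY ⊤).trans le_sup_left
  · exact (map₂_midContract_map₂_mk_le e P ⊤ ⊤ Q).trans
      ((map₂_le_map₂_right le_top).trans le_sup_left)
  · exact (map₂_midContract_map₂_mk_le e ⊤ RX ⊤ Q).trans le_sup_right

end Contraction

lemma map_map_tensorTensorTensorComm_eq_midContract {K : Type} [Field K]
    {A V B : Type} [AddCommMonoid A] [AddCommMonoid V] [AddCommMonoid B]
    [Module K A] [Module K V] [Module K B]
    (μ : ((A ⊗[K] V) ⊗[K] (Dual K V ⊗[K] B)) →ₗ[K] (A ⊗[K] B))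
    (hμ : ∀ (a : A) (v : V) (η : Dual K V) (b : B),
      μ ((a ⊗ₜ[K] v) ⊗ₜ[K] (η ⊗ₜ[K] b)) = η v • (a ⊗ₜ[K] b)) :
    (((mk K _ _).compr₂ (tensorTensorTensorComm K (A ⊗[K] V) (A ⊗[K] V)
        (Dual K V ⊗[K] B) (Dual K V ⊗[K] B)).toLinearMap).compr₂ (map μ μ)).compl₁₂
        (tensorTensorTensorComm K A A V V).toLinearMap
        (tensorTensorTensorComm K (Dual K V) (Dual K V) B B).toLinearMap =
      (midContract (dualDistrib K V V).flip).compr₂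
        (tensorTensorTensorComm K A A B B).toLinearMap := by
  ext a a' v v' η η' b b'
  simp [hμ, ← smul_tmul', tmul_smul, smul_smul, mul_comm]

theorem composition_isQuadMor_general (K : Type) [Field K]
    (U V W : Type) [AddCommGroup U] [AddCommGroup V] [AddCommGroup W] [Module K U] [Module K V] [Module K W]
    (RU : Submodule K (U ⊗[K] U)) (RV : Submodule K (V ⊗[K] V)) (RW : Submodule K (W ⊗[K] W))
    (μ : ((Module.Dual K U ⊗[K] V) ⊗[K] (Module.Dual K V ⊗[K] W)) →ₗ[K]
      (Module.Dual K U ⊗[K] W))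
    (hμ : ∀ (ξ : Module.Dual K U) (v : V) (η : Module.Dual K V) (w : W),
      μ ((ξ ⊗ₜ[K] v) ⊗ₜ[K] (η ⊗ₜ[K] w)) = η v • (ξ ⊗ₜ[K] w)) :
    IsQuadMor K
      (blackRel K (whiteRel K (annRel K RU) RV) (whiteRel K (annRel K RV) RW))
      (whiteRel K (annRel K RU) RW) μ := by
  have hRV : ∀ x ∈ RV, ∀ s ∈ annRel K RV, (dualDistrib K V V).flip x s = 0 :=
    fun x hx s hs ↦ dualDistrib_apply_eq_zero_of_mem_annRel hs hx
  simp only [IsQuadMor, blackRel, whiteRel, subTensor_eq_map₂]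
  rw [Submodule.map_map₂, Submodule.map_map₂, Submodule.map₂_map_map,
    map_map_tensorTensorTensorComm_eq_midContract μ hμ, ← Submodule.map_map₂]
  exact Submodule.map_mono (map₂_midContract_white_le _ _ _ hRV)

/-- The composition law `μ : (U* ⊗ V) ⊗ (V* ⊗ W) → U* ⊗ W` of the QA-enrichment is a
morphism of quadratic data from the black product of the white products
`(U*,R_U^⊥) ∘ (V,R_V)` and `(V*,R_V^⊥) ∘ (W,R_W)` to `(U*,R_U^⊥) ∘ (W,R_W)`. -/
theorem composition_isQuadMor (K : Type) [Field K]
    (U V W : Type) [AddCommGroup U] [AddCommGroup V] [AddCommGroup W] [Module K U] [Module K V] [Module K W] [FiniteDimensional K U] [FiniteDimensional K V] [FiniteDimensional K W]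
    (RU : Submodule K (U ⊗[K] U)) (RV : Submodule K (V ⊗[K] V)) (RW : Submodule K (W ⊗[K] W))
    (μ : ((Module.Dual K U ⊗[K] V) ⊗[K] (Module.Dual K V ⊗[K] W)) →ₗ[K]
      (Module.Dual K U ⊗[K] W))
    (hμ : ∀ (ξ : Module.Dual K U) (v : V) (η : Module.Dual K V) (w : W),
      μ ((ξ ⊗ₜ[K] v) ⊗ₜ[K] (η ⊗ₜ[K] w)) = η v • (ξ ⊗ₜ[K] w)) :
    IsQuadMor K
      (blackRel K (whiteRel K (annRel K RU) RV) (whiteRel K (annRel K RV) RW))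
      (whiteRel K (annRel K RU) RW) μ :=
  composition_isQuadMor_general K U V W RU RV RW μ hμ
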